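/- arXiv:1501.06444 — 4 statements merged into one kernel-verified Lean document; each statement's English description precedes it below -/
import Mathlib

section
/- Let n ≥ 2Q. Let θ = (α, π) and θ' = (α', π') be two multiplex SBM parameters such that α_q > 0 and α'_q > 0 for every q, and such that for every w ∈ {0,1}^K the Q coordinates of r^{(w)}(θ) = (r_1^{(w)}(θ), …, r_Q^{(w)}(θ)) are pairwise distinct, and likewise for θ'. If ℓ(x; θ) = ℓ(x; θ') for every multiplex graph x = (x_{ij})_{i≠j} with x_{ij} ∈ {0,1}^K, then θ and θ' coincide up to a relabeling of the blocks: there is a permutation σ of {1, …, Q} with α'_q = α_{σ(q)} and π'^{(w)}_{ql} = π^{(w)}_{σ(q)σ(l)} for all w, q, l. -/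
open Finset

/-- A tie pattern between two nodes in a multiplex network with `K` layers. -/
abbrev Tie (K : ℕ) := Fin K → Bool

/-- A multiplex graph on `n` nodes with `K` layers (only off-diagonal entries matter). -/
abbrev MGraph (n K : ℕ) := Fin n → Fin n → Tie K

/-- `(α, π)` is a valid multiplex SBM parameter. -/
def IsParam (Q K : ℕ) (α : Fin Q → ℝ) (π : Fin Q → Fin Q → Tie K → ℝ) : Prop :=
  (∀ q, 0 ≤ α q) ∧ (∑ q, α q = 1) ∧ (∀ q l w, 0 ≤ π q l w) ∧ (∀ q l, ∑ w, π q l w = 1)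

/-- The likelihood `ℓ(x; α, π)` of a multiplex graph under the multiplex SBM. -/
noncomputable def likelihood {n Q K : ℕ} (α : Fin Q → ℝ)
    (π : Fin Q → Fin Q → Tie K → ℝ) (x : MGraph n K) : ℝ :=
  ∑ Z : Fin n → Fin Q,
    (∏ p ∈ (univ : Finset (Fin n)).offDiag, π (Z p.1) (Z p.2) (x p.1 p.2)) *
      ∏ i, α (Z i)

namespace SBMaux

variable {n Q K : ℕ}

lemma sum_prod_pi (h : Fin n → Fin Q → ℝ) :
    ∑ Z : Fin n → Fin Q, ∏ i, h i (Z i) = ∏ i, ∑ q, h i q := by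
  rw [Finset.prod_univ_sum]
  simp [Fintype.piFinset_univ]

/-- Partial likelihood over an edge set `E`. -/
noncomputable def L (α : Fin Q → ℝ) (π : Fin Q → Fin Q → Tie K → ℝ)
    (E : Finset (Fin n × Fin n)) (x : Fin n → Fin n → Tie K) : ℝ :=
  ∑ Z : Fin n → Fin Q,
    (∏ p ∈ E, π (Z p.1) (Z p.2) (x p.1 p.2)) * ∏ i, α (Z i)

def rr (α : Fin Q → ℝ) (π : Fin Q → Fin Q → Tie K → ℝ) (q : Fin Q) (w : Tie K) : ℝ :=
  ∑ l, π q l w * α l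

lemma marg_step (α : Fin Q → ℝ) (π : Fin Q → Fin Q → Tie K → ℝ)
    (hπ : ∀ q l, ∑ w, π q l w = 1)
    (E : Finset (Fin n × Fin n)) (p₀ : Fin n × Fin n) (hp : p₀ ∉ E)
    (x : Fin n → Fin n → Tie K) :
    ∑ w : Tie K, L α π (insert p₀ E) (fun i j => if (i, j) = p₀ then w else x i j)
      = L α π E x := by
  unfold L
  rw [Finset.sum_comm]
  refine Finset.sum_congr rfl fun Z _ => ?_
  have key : ∀ w : Tie K,
      (∏ p ∈ insert p₀ E,
        π (Z p.1) (Z p.2) (if (p.1, p.2) = p₀ then w else x p.1 p.2))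
      = π (Z p₀.1) (Z p₀.2) w * ∏ p ∈ E, π (Z p.1) (Z p.2) (x p.1 p.2) := by
    intro w
    rw [Finset.prod_insert hp]
    congr 1
    · simp
    · refine Finset.prod_congr rfl fun p hpE => ?_
      have : (p.1, p.2) ≠ p₀ := by
        intro h
        rw [← h] at hp
        exact hp (by simpa using hpE)
      simp [this]
  calc ∑ w : Tie K, (∏ p ∈ insert p₀ E,
          π (Z p.1) (Z p.2) (if (p.1, p.2) = p₀ then w else x p.1 p.2)) * ∏ i, α (Z i)
      = ∑ w : Tie K, (π (Z p₀.1) (Z p₀.2) w * ∏ p ∈ E, π (Z p.1) (Z p.2) (x p.1 p.2))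
          * ∏ i, α (Z i) := by
        refine Finset.sum_congr rfl fun w _ => ?_; rw [key w]
    _ = (∑ w : Tie K, π (Z p₀.1) (Z p₀.2) w) *
          ((∏ p ∈ E, π (Z p.1) (Z p.2) (x p.1 p.2)) * ∏ i, α (Z i)) := by
        rw [Finset.sum_mul]
        exact Finset.sum_congr rfl fun w _ => by ring
    _ = (∏ p ∈ E, π (Z p.1) (Z p.2) (x p.1 p.2)) * ∏ i, α (Z i) := by
        rw [hπ]; ring


lemma insert_sdiff_insert' (s F : Finset (Fin n × Fin n)) (p : Fin n × Fin n)
    (hps : p ∈ s) (hpF : p ∉ F) :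
    insert p (s \ insert p F) = s \ F := by
  ext q
  simp only [mem_insert, mem_sdiff]
  by_cases hqp : q = p <;> simp [hqp, hps, hpF]

lemma sdiff_insert_of_notMem' (s F : Finset (Fin n × Fin n)) (p : Fin n × Fin n)
    (hps : p ∉ s) : s \ insert p F = s \ F := by
  ext q
  simp only [mem_sdiff, mem_insert]
  by_cases hqp : q = p <;> simp [hqp, hps]

lemma marg (α α' : Fin Q → ℝ) (π π' : Fin Q → Fin Q → Tie K → ℝ)
    (hπ : ∀ q l, ∑ w, π q l w = 1) (hπ' : ∀ q l, ∑ w, π' q l w = 1)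
    (hlik : ∀ x : Fin n → Fin n → Tie K,
      L α π (univ : Finset (Fin n)).offDiag x = L α' π' (univ : Finset (Fin n)).offDiag x)
    (F : Finset (Fin n × Fin n)) :
    ∀ x, L α π ((univ : Finset (Fin n)).offDiag \ F) x
        = L α' π' ((univ : Finset (Fin n)).offDiag \ F) x := by
  classical
  induction F using Finset.induction_on with
  | empty => simpa using hlik
  | @insert p F hpF ih =>
    intro x
    by_cases hps : p ∈ (univ : Finset (Fin n)).offDiag
    · have hE : insert p ((univ : Finset (Fin n)).offDiag \ insert p F)
          = (univ : Finset (Fin n)).offDiag \ F := insert_sdiff_insert' _ _ _ hps hpF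
      have hpE : p ∉ (univ : Finset (Fin n)).offDiag \ insert p F := by
        simp [mem_sdiff]
      rw [← marg_step α π hπ _ p hpE x, ← marg_step α' π' hπ' _ p hpE x]
      refine Finset.sum_congr rfl fun w _ => ?_
      rw [hE]
      exact ih _
    · rw [sdiff_insert_of_notMem' _ _ _ hps]
      exact ih x

lemma margE (α α' : Fin Q → ℝ) (π π' : Fin Q → Fin Q → Tie K → ℝ)
    (hπ : ∀ q l, ∑ w, π q l w = 1) (hπ' : ∀ q l, ∑ w, π' q l w = 1)
    (hlik : ∀ x : Fin n → Fin n → Tie K,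
      L α π (univ : Finset (Fin n)).offDiag x = L α' π' (univ : Finset (Fin n)).offDiag x)
    (E : Finset (Fin n × Fin n)) (hE : E ⊆ (univ : Finset (Fin n)).offDiag)
    (x : Fin n → Fin n → Tie K) :
    L α π E x = L α' π' E x := by
  have := marg α α' π π' hπ hπ' hlik ((univ : Finset (Fin n)).offDiag \ E) x
  rwa [Finset.sdiff_sdiff_eq_self hE] at this
lemma star1 (α : Fin Q → ℝ) (π : Fin Q → Fin Q → Tie K → ℝ)
    (hα : ∑ q, α q = 1) (a : Fin n) (A : Finset (Fin n)) (ha : a ∉ A)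
    (x : Fin n → Fin n → Tie K) :
    L α π (A.image (fun i => (a, i))) x = ∑ q, α q * ∏ i ∈ A, rr α π q (x a i) := by
  classical
  have hAsub : A ⊆ univ.erase a := fun i hi =>
    mem_erase.mpr ⟨fun h => ha (h ▸ hi), mem_univ i⟩
  set h : Fin Q → Fin n → Fin Q → ℝ := fun q i z =>
    if i = a then (if z = q then α q else 0)
    else if i ∈ A then π q z (x a i) * α z else α z with hh
  have claim1 : ∀ q, ∑ Z : Fin n → Fin Q, ∏ i, h q i (Z i)
      = α q * ∏ i ∈ A, rr α π q (x a i) := by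
    intro q
    rw [sum_prod_pi]
    rw [← Finset.mul_prod_erase univ _ (mem_univ a)]
    congr 1
    · simp [hh]
    · have : ∀ i ∈ univ.erase a, (∑ z, h q i z)
          = (if i ∈ A then rr α π q (x a i) else 1) := by
        intro i hi
        have hia : i ≠ a := (mem_erase.mp hi).1
        by_cases hiA : i ∈ A <;> simp [hh, hia, hiA, rr, hα]
      rw [Finset.prod_congr rfl this, Finset.prod_ite_mem,
        Finset.inter_eq_right.mpr hAsub]
  have claim2 : ∀ Z : Fin n → Fin Q, ∑ q, ∏ i, h q i (Z i)
      = (∏ p ∈ A.image (fun i => (a, i)), π (Z p.1) (Z p.2) (x p.1 p.2)) *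
          ∏ i, α (Z i) := by
    intro Z
    have himg : (∏ p ∈ A.image (fun i => (a, i)), π (Z p.1) (Z p.2) (x p.1 p.2))
        = ∏ i ∈ A, π (Z a) (Z i) (x a i) := by
      rw [Finset.prod_image]
      intro y _ z _ hyz
      simpa using hyz
    rw [himg]
    have expand : ∀ q, ∏ i, h q i (Z i)
        = (if Z a = q then α q else 0) *
            ∏ i ∈ univ.erase a, (if i ∈ A then π q (Z i) (x a i) * α (Z i) else α (Z i)) := by
      intro q
      rw [← Finset.mul_prod_erase univ _ (mem_univ a)]
      congr 1
      · simp [hh]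
      · refine Finset.prod_congr rfl fun i hi => ?_
        have hia : i ≠ a := (mem_erase.mp hi).1
        simp [hh, hia]
    calc ∑ q, ∏ i, h q i (Z i)
        = ∑ q, (if Z a = q then
            α q * ∏ i ∈ univ.erase a, (if i ∈ A then π q (Z i) (x a i) * α (Z i) else α (Z i))
          else 0) := by
          refine Finset.sum_congr rfl fun q _ => ?_
          rw [expand q]
          split_ifs <;> ring
      _ = α (Z a) * ∏ i ∈ univ.erase a,
            (if i ∈ A then π (Z a) (Z i) (x a i) * α (Z i) else α (Z i)) := by
          rw [Finset.sum_ite_eq]; simp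
      _ = (∏ i ∈ A, π (Z a) (Z i) (x a i)) * ∏ i, α (Z i) := by
          have : ∀ i ∈ univ.erase a,
              (if i ∈ A then π (Z a) (Z i) (x a i) * α (Z i) else α (Z i))
              = (if i ∈ A then π (Z a) (Z i) (x a i) else 1) * α (Z i) := by
            intro i _
            split_ifs <;> ring
          rw [Finset.prod_congr rfl this, Finset.prod_mul_distrib,
            Finset.prod_ite_mem, Finset.inter_eq_right.mpr hAsub,
            ← Finset.mul_prod_erase univ (fun i => α (Z i)) (mem_univ a)]
          ring
  calc L α π (A.image (fun i => (a, i))) x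
      = ∑ Z : Fin n → Fin Q, ∑ q, ∏ i, h q i (Z i) := by
        unfold L
        exact Finset.sum_congr rfl fun Z _ => (claim2 Z).symm
    _ = ∑ q, ∑ Z : Fin n → Fin Q, ∏ i, h q i (Z i) := Finset.sum_comm
    _ = ∑ q, α q * ∏ i ∈ A, rr α π q (x a i) :=
        Finset.sum_congr rfl fun q _ => claim1 q

lemma star2 (α : Fin Q → ℝ) (π : Fin Q → Fin Q → Tie K → ℝ)
    (hα : ∑ q, α q = 1) (a b : Fin n) (hab : a ≠ b)
    (A B : Finset (Fin n)) (haA : a ∉ A) (hbA : b ∉ A) (haB : a ∉ B) (hbB : b ∉ B)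
    (hAB : Disjoint A B) (x : Fin n → Fin n → Tie K) :
    L α π (insert (a, b) ((A.image (fun i => (a, i))) ∪ (B.image (fun j => (b, j))))) x
      = ∑ q, ∑ l, α q * α l * π q l (x a b) *
          (∏ i ∈ A, rr α π q (x a i)) * (∏ j ∈ B, rr α π l (x b j)) := by
  classical
  have hba : b ≠ a := hab.symm
  have hbmem : b ∈ univ.erase a := mem_erase.mpr ⟨hba, mem_univ b⟩
  set s : Finset (Fin n) := (univ.erase a).erase b with hs
  have hAsub : A ⊆ s := fun i hi => by
    refine mem_erase.mpr ⟨fun h => hbA (h ▸ hi), mem_erase.mpr ⟨fun h => haA (h ▸ hi), mem_univ i⟩⟩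
  have hBsub : B ⊆ s := fun i hi => by
    refine mem_erase.mpr ⟨fun h => hbB (h ▸ hi), mem_erase.mpr ⟨fun h => haB (h ▸ hi), mem_univ i⟩⟩
  set h : Fin Q → Fin Q → Fin n → Fin Q → ℝ := fun q l i z =>
    if i = a then (if z = q then α q else 0)
    else if i = b then (if z = l then α l * π q l (x a b) else 0)
    else if i ∈ A then π q z (x a i) * α z
    else if i ∈ B then π l z (x b i) * α z
    else α z with hh
  -- splitting the product over all nodes
  have split : ∀ f : Fin n → ℝ, ∏ i, f i = f a * (f b * ∏ i ∈ s, f i) := by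
    intro f
    rw [← Finset.mul_prod_erase univ f (mem_univ a), ← Finset.mul_prod_erase _ f hbmem]
  -- inner product rewriting on s
  have inner_split : ∀ (u v : Fin n → ℝ),
      (∏ i ∈ s, (if i ∈ A then u i else if i ∈ B then v i else 1))
        = (∏ i ∈ A, u i) * ∏ i ∈ B, v i := by
    intro u v
    have : ∀ i ∈ s, (if i ∈ A then u i else if i ∈ B then v i else 1)
        = (if i ∈ A then u i else 1) * (if i ∈ B then v i else 1) := by
      intro i _
      by_cases hiA : i ∈ A
      · have hiB : i ∉ B := Finset.disjoint_left.mp hAB hiA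
        simp [hiA, hiB]
      · by_cases hiB : i ∈ B <;> simp [hiA, hiB]
    rw [Finset.prod_congr rfl this, Finset.prod_mul_distrib, Finset.prod_ite_mem,
      Finset.prod_ite_mem, Finset.inter_eq_right.mpr hAsub, Finset.inter_eq_right.mpr hBsub]
  have claim1 : ∀ q l, ∑ Z : Fin n → Fin Q, ∏ i, h q l i (Z i)
      = α q * α l * π q l (x a b) *
          (∏ i ∈ A, rr α π q (x a i)) * (∏ j ∈ B, rr α π l (x b j)) := by
    intro q l
    rw [sum_prod_pi, split]
    have h1 : ∑ z, h q l a z = α q := by simp [hh]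
    have h2 : ∑ z, h q l b z = α l * π q l (x a b) := by simp [hh, hba]
    have h3 : (∏ i ∈ s, ∑ z, h q l i z)
        = (∏ i ∈ A, rr α π q (x a i)) * ∏ j ∈ B, rr α π l (x b j) := by
      rw [← inner_split]
      refine Finset.prod_congr rfl fun i hi => ?_
      have hib : i ≠ b := (mem_erase.mp hi).1
      have hia : i ≠ a := (mem_erase.mp (mem_erase.mp hi).2).1
      by_cases hiA : i ∈ A
      · simp [hh, hia, hib, hiA, rr]
      · by_cases hiB : i ∈ B <;> simp [hh, hia, hib, hiA, hiB, rr, hα]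
    rw [h1, h2, h3]
    ring
  have claim2 : ∀ Z : Fin n → Fin Q, ∑ q, ∑ l, ∏ i, h q l i (Z i)
      = (∏ p ∈ insert (a, b) ((A.image (fun i => (a, i))) ∪ (B.image (fun j => (b, j)))),
          π (Z p.1) (Z p.2) (x p.1 p.2)) * ∏ i, α (Z i) := by
    intro Z
    have hnotmem : (a, b) ∉ (A.image (fun i => (a, i))) ∪ (B.image (fun j => (b, j))) := by
      simp only [mem_union, mem_image, Prod.mk.injEq, not_or, not_exists, not_and]
      constructor
      · intro i hi hia hib
        exact hbA (hib ▸ hi)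
      · intro j hj hba' _
        exact hab hba'.symm
    have hdisj : Disjoint (A.image (fun i => (a, i))) (B.image (fun j => (b, j))) := by
      rw [Finset.disjoint_left]
      rintro p hp hp'
      rw [mem_image] at hp hp'
      obtain ⟨i, hi, rfl⟩ := hp
      obtain ⟨j, hj, hEq⟩ := hp'
      exact hab ((Prod.mk.injEq _ _ _ _).mp hEq).1.symm
    have himg : (∏ p ∈ insert (a, b) ((A.image (fun i => (a, i))) ∪ (B.image (fun j => (b, j)))),
          π (Z p.1) (Z p.2) (x p.1 p.2))
        = π (Z a) (Z b) (x a b) * ((∏ i ∈ A, π (Z a) (Z i) (x a i)) *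
            ∏ j ∈ B, π (Z b) (Z j) (x b j)) := by
      rw [Finset.prod_insert hnotmem, Finset.prod_union hdisj, Finset.prod_image, Finset.prod_image]
      · intro y _ z _ hyz; simpa using hyz
      · intro y _ z _ hyz; simpa using hyz
    rw [himg]
    set G : Fin Q → Fin Q → ℝ := fun q l =>
      ∏ i ∈ s, (if i ∈ A then π q (Z i) (x a i) * α (Z i)
        else if i ∈ B then π l (Z i) (x b i) * α (Z i) else α (Z i)) with hGdef
    have expand : ∀ q l, ∏ i, h q l i (Z i)
        = (if Z a = q then α q else 0) *
            ((if Z b = l then α l * π q l (x a b) else 0) * G q l) := by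
      intro q l
      rw [split]
      congr 1
      · simp [hh]
      congr 1
      · simp [hh, hba]
      refine Finset.prod_congr rfl fun i hi => ?_
      have hib : i ≠ b := (mem_erase.mp hi).1
      have hia : i ≠ a := (mem_erase.mp (mem_erase.mp hi).2).1
      simp [hh, hia, hib]
    have hG : ∀ q l, G q l
        = ((∏ i ∈ A, π q (Z i) (x a i)) * ∏ j ∈ B, π l (Z j) (x b j)) * ∏ i ∈ s, α (Z i) := by
      intro q l
      have : ∀ i ∈ s, (if i ∈ A then π q (Z i) (x a i) * α (Z i)
            else if i ∈ B then π l (Z i) (x b i) * α (Z i) else α (Z i))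
          = (if i ∈ A then π q (Z i) (x a i) else if i ∈ B then π l (Z i) (x b i) else 1)
              * α (Z i) := by
        intro i _
        by_cases hiA : i ∈ A
        · simp [hiA]
        · by_cases hiB : i ∈ B <;> simp [hiA, hiB]
      show (∏ i ∈ s, (if i ∈ A then π q (Z i) (x a i) * α (Z i)
        else if i ∈ B then π l (Z i) (x b i) * α (Z i) else α (Z i))) = _
      rw [Finset.prod_congr rfl this, Finset.prod_mul_distrib, inner_split]
    calc ∑ q, ∑ l, ∏ i, h q l i (Z i)
        = ∑ q, (if Z a = q then α q else 0) *
            ∑ l, ((if Z b = l then α l * π q l (x a b) else 0) * G q l) := by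
          refine Finset.sum_congr rfl fun q _ => ?_
          rw [Finset.mul_sum]
          exact Finset.sum_congr rfl fun l _ => expand q l
      _ = ∑ q, (if Z a = q then α q * (α (Z b) * π q (Z b) (x a b) * G q (Z b)) else 0) := by
          refine Finset.sum_congr rfl fun q _ => ?_
          have : (∑ l, ((if Z b = l then α l * π q l (x a b) else 0) * G q l))
              = ∑ l, (if Z b = l then α l * π q l (x a b) * G q l else 0) :=
            Finset.sum_congr rfl fun l _ => by split_ifs <;> ring
          rw [this, Finset.sum_ite_eq]
          simp only [mem_univ, if_true]
          split_ifs <;> ring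
      _ = α (Z a) * (α (Z b) * π (Z a) (Z b) (x a b) * G (Z a) (Z b)) := by
          rw [Finset.sum_ite_eq]; simp
      _ = (π (Z a) (Z b) (x a b) * ((∏ i ∈ A, π (Z a) (Z i) (x a i)) *
            ∏ j ∈ B, π (Z b) (Z j) (x b j))) * ∏ i, α (Z i) := by
          rw [hG, split (fun i => α (Z i))]
          ring
  calc L α π _ x
      = ∑ Z : Fin n → Fin Q, ∑ q, ∑ l, ∏ i, h q l i (Z i) := by
        unfold L
        exact Finset.sum_congr rfl fun Z _ => (claim2 Z).symm
    _ = ∑ q, ∑ l, ∑ Z : Fin n → Fin Q, ∏ i, h q l i (Z i) := by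
        rw [Finset.sum_comm]
        exact Finset.sum_congr rfl fun q _ => Finset.sum_comm
    _ = _ := Finset.sum_congr rfl fun q _ => Finset.sum_congr rfl fun l _ => claim1 q l

open Polynomial in
/-- Vanishing of power sums over a finite set of reals forces all coefficients to vanish. -/
lemma vandF (T : Finset ℝ) (c : ℝ → ℝ)
    (h : ∀ j < T.card, ∑ t ∈ T, c t * t ^ j = 0) :
    ∀ t ∈ T, c t = 0 := by
  intro t₀ ht₀
  classical
  set p : ℝ[X] := ∏ t ∈ T.erase t₀, (X - C t) with hp
  have hmonic : p.Monic := monic_prod_of_monic _ _ fun t _ => monic_X_sub_C t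
  have hdeg : p.natDegree = T.card - 1 := by
    rw [hp, natDegree_prod _ _ fun t _ => X_sub_C_ne_zero t]
    simp [card_erase_of_mem ht₀]
  have hcardpos : 0 < T.card := card_pos.mpr ⟨t₀, ht₀⟩
  have hdeg1 : p.natDegree + 1 = T.card := by omega
  have hevalz : ∀ t ∈ T.erase t₀, p.eval t = 0 := by
    intro t ht
    rw [hp, eval_prod]
    exact Finset.prod_eq_zero ht (by simp)
  have hevalne : p.eval t₀ ≠ 0 := by
    rw [hp, eval_prod]
    refine Finset.prod_ne_zero_iff.mpr fun t ht => ?_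
    have : t ≠ t₀ := (mem_erase.mp ht).1
    simp [sub_ne_zero.mpr (Ne.symm this)]
  have key : ∑ t ∈ T, c t * p.eval t = 0 := by
    have : ∀ t ∈ T, c t * p.eval t
        = ∑ j ∈ Finset.range T.card, p.coeff j * (c t * t ^ j) := by
      intro t _
      rw [eval_eq_sum_range, hdeg1, Finset.mul_sum]
      exact Finset.sum_congr rfl fun j _ => by ring
    rw [Finset.sum_congr rfl this, Finset.sum_comm]
    rw [show (0:ℝ) = ∑ j ∈ Finset.range T.card, p.coeff j * 0 by simp]
    refine Finset.sum_congr rfl fun j hj => ?_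
    rw [← Finset.mul_sum, h j (Finset.mem_range.mp hj)]
  have : ∑ t ∈ T, c t * p.eval t = c t₀ * p.eval t₀ := by
    rw [← Finset.add_sum_erase _ _ ht₀]
    rw [Finset.sum_eq_zero fun t ht => by rw [hevalz t ht, mul_zero]]
    ring
  rw [this] at key
  exact (mul_eq_zero.mp key).resolve_right hevalne

open Polynomial in
/-- Family version over an injective family. -/
lemma vand {m : ℕ} (x : Fin m → ℝ) (hx : Function.Injective x) (c : Fin m → ℝ)
    (h : ∀ j < m, ∑ i, c i * x i ^ j = 0) : ∀ i, c i = 0 := by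
  classical
  intro i₀
  set T : Finset ℝ := Finset.image x univ with hT
  have hcard : T.card = m := by
    rw [hT, Finset.card_image_of_injective _ hx, card_univ, Fintype.card_fin]
  set c' : ℝ → ℝ := fun t => ∑ i ∈ univ.filter (fun i => x i = t), c i with hc'
  have hmom : ∀ j < T.card, ∑ t ∈ T, c' t * t ^ j = 0 := by
    intro j hj
    rw [← h j (hcard ▸ hj)]
    rw [hc']
    have : ∀ t ∈ T, (∑ i ∈ univ.filter (fun i => x i = t), c i) * t ^ j
        = ∑ i ∈ univ.filter (fun i => x i = t), c i * x i ^ j := by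
      intro t _
      rw [Finset.sum_mul]
      refine Finset.sum_congr rfl fun i hi => ?_
      rw [(Finset.mem_filter.mp hi).2]
    rw [Finset.sum_congr rfl this]
    exact Finset.sum_fiberwise_of_maps_to (fun i _ => Finset.mem_image_of_mem x (mem_univ i)) _
  have hfilter : univ.filter (fun i => x i = x i₀) = {i₀} := by
    ext i
    simp [hx.eq_iff]
  have := vandF T c' hmom (x i₀) (Finset.mem_image_of_mem x (mem_univ i₀))
  rw [hc'] at this
  simpa [hfilter] using this


lemma fiber_moment {Q : ℕ} (T : Finset ℝ) (R : Fin Q → ℝ) (hR : ∀ q, R q ∈ T)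
    (β : Fin Q → ℝ) (j : ℕ) :
    ∑ t ∈ T, (∑ q ∈ univ.filter (fun q => R q = t), β q) * t ^ j
      = ∑ q, β q * R q ^ j := by
  have : ∀ t ∈ T, (∑ q ∈ univ.filter (fun q => R q = t), β q) * t ^ j
      = ∑ q ∈ univ.filter (fun q => R q = t), β q * R q ^ j := by
    intro t _
    rw [Finset.sum_mul]
    refine Finset.sum_congr rfl fun q hq => ?_
    rw [(Finset.mem_filter.mp hq).2]
  rw [Finset.sum_congr rfl this]
  exact Finset.sum_fiberwise_of_maps_to (fun q _ => hR q) _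

lemma star1Eq (α α' : Fin Q → ℝ) (π π' : Fin Q → Fin Q → Tie K → ℝ)
    (hα1 : ∑ q, α q = 1) (hα1' : ∑ q, α' q = 1)
    (hπ1 : ∀ q l, ∑ w, π q l w = 1) (hπ1' : ∀ q l, ∑ w, π' q l w = 1)
    (hlikL : ∀ x : Fin n → Fin n → Tie K,
      L α π (univ : Finset (Fin n)).offDiag x = L α' π' (univ : Finset (Fin n)).offDiag x)
    (a : Fin n) (A : Finset (Fin n)) (ha : a ∉ A) (x : Fin n → Fin n → Tie K) :
    ∑ q, α q * ∏ i ∈ A, rr α π q (x a i) = ∑ q, α' q * ∏ i ∈ A, rr α' π' q (x a i) := by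
  rw [← star1 α π hα1 a A ha x, ← star1 α' π' hα1' a A ha x]
  refine margE α α' π π' hπ1 hπ1' hlikL _ ?_ x
  intro p hp
  rw [mem_image] at hp
  obtain ⟨i, hi, rfl⟩ := hp
  exact mem_offDiag.mpr ⟨mem_univ _, mem_univ _, fun h => ha (by rw [show a = i from h]; exact hi)⟩

lemma star2Eq (α α' : Fin Q → ℝ) (π π' : Fin Q → Fin Q → Tie K → ℝ)
    (hα1 : ∑ q, α q = 1) (hα1' : ∑ q, α' q = 1)
    (hπ1 : ∀ q l, ∑ w, π q l w = 1) (hπ1' : ∀ q l, ∑ w, π' q l w = 1)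
    (hlikL : ∀ x : Fin n → Fin n → Tie K,
      L α π (univ : Finset (Fin n)).offDiag x = L α' π' (univ : Finset (Fin n)).offDiag x)
    (a b : Fin n) (hab : a ≠ b) (A B : Finset (Fin n))
    (haA : a ∉ A) (hbA : b ∉ A) (haB : a ∉ B) (hbB : b ∉ B) (hAB : Disjoint A B)
    (x : Fin n → Fin n → Tie K) :
    (∑ q, ∑ l, α q * α l * π q l (x a b) *
        (∏ i ∈ A, rr α π q (x a i)) * (∏ j ∈ B, rr α π l (x b j)))
      = ∑ q, ∑ l, α' q * α' l * π' q l (x a b) *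
          (∏ i ∈ A, rr α' π' q (x a i)) * (∏ j ∈ B, rr α' π' l (x b j)) := by
  rw [← star2 α π hα1 a b hab A B haA hbA haB hbB hAB x,
    ← star2 α' π' hα1' a b hab A B haA hbA haB hbB hAB x]
  refine margE α α' π π' hπ1 hπ1' hlikL _ ?_ x
  intro p hp
  rw [mem_insert] at hp
  rcases hp with rfl | hp
  · exact mem_offDiag.mpr ⟨mem_univ _, mem_univ _, hab⟩
  rw [mem_union] at hp
  rcases hp with hp | hp
  · rw [mem_image] at hp
    obtain ⟨i, hi, rfl⟩ := hp
    exact mem_offDiag.mpr ⟨mem_univ _, mem_univ _, fun h => haA (by rw [show a = i from h]; exact hi)⟩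
  · rw [mem_image] at hp
    obtain ⟨j, hj, rfl⟩ := hp
    exact mem_offDiag.mpr ⟨mem_univ _, mem_univ _, fun h => hbB (by rw [show b = j from h]; exact hj)⟩

end SBMaux

/-- Identifiability of the multiplex SBM up to relabeling of the blocks. -/
theorem multiplex_SBM_identifiability
    (n Q K : ℕ) (hQ : 1 ≤ Q) (hK : 1 ≤ K) (hn : 2 * Q ≤ n)
    (α α' : Fin Q → ℝ) (π π' : Fin Q → Fin Q → Tie K → ℝ)
    (hp : IsParam Q K α π) (hp' : IsParam Q K α' π')
    (hαpos : ∀ q, 0 < α q) (hα'pos : ∀ q, 0 < α' q)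
    (hdistinct : ∀ w : Tie K, Function.Injective fun q => ∑ l, π q l w * α l)
    (hdistinct' : ∀ w : Tie K, Function.Injective fun q => ∑ l, π' q l w * α' l)
    (hlik : ∀ x : MGraph n K, likelihood α π x = likelihood α' π' x) :
    ∃ σ : Equiv.Perm (Fin Q),
      (∀ q, α' q = α (σ q)) ∧ ∀ (w : Tie K) (q l : Fin Q), π' q l w = π (σ q) (σ l) w := by
  classical
  obtain ⟨hα0, hα1, hπ0, hπ1⟩ := hp
  obtain ⟨hα0', hα1', hπ0', hπ1'⟩ := hp'
  have hlikL : ∀ x : Fin n → Fin n → Tie K,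
      SBMaux.L α π (univ : Finset (Fin n)).offDiag x
        = SBMaux.L α' π' (univ : Finset (Fin n)).offDiag x := hlik
  have hinj : ∀ w : Tie K, Function.Injective fun q => SBMaux.rr α π q w := hdistinct
  have hinj' : ∀ w : Tie K, Function.Injective fun q => SBMaux.rr α' π' q w := hdistinct'
  have hn2 : 2 ≤ n := by omega
  set a : Fin n := ⟨0, by omega⟩ with ha_def
  set b : Fin n := ⟨1, by omega⟩ with hb_def
  have hab : a ≠ b := by simp [ha_def, hb_def, Fin.ext_iff]
  have hbmem : b ∈ (univ : Finset (Fin n)).erase a := mem_erase.mpr ⟨hab.symm, mem_univ b⟩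
  have hcard1 : ((univ : Finset (Fin n)).erase a).card = n - 1 := by
    rw [card_erase_of_mem (mem_univ a)]; simp
  have hcard2 : (((univ : Finset (Fin n)).erase a).erase b).card = n - 2 := by
    rw [card_erase_of_mem hbmem, hcard1]
    omega
  set w₀ : Tie K := fun _ => false with hw₀
  -- Step 1 : equal moments of the r-values, producing the permutation σ
  have momentsA : ∀ j, j < 2 * Q →
      (∑ q, α q * (SBMaux.rr α π q w₀) ^ j) = ∑ q, α' q * (SBMaux.rr α' π' q w₀) ^ j := by
    intro j hj
    have hjle : j ≤ ((univ : Finset (Fin n)).erase a).card := by rw [hcard1]; omega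
    obtain ⟨A, hAsub, hAcard⟩ := Finset.exists_subset_card_eq hjle
    have ha : a ∉ A := fun h => (mem_erase.mp (hAsub h)).1 rfl
    have h := SBMaux.star1Eq α α' π π' hα1 hα1' hπ1 hπ1' hlikL a A ha (fun _ _ => w₀)
    simpa [Finset.prod_const, hAcard] using h
  set T : Finset ℝ :=
    (Finset.image (fun q => SBMaux.rr α π q w₀) univ) ∪
      (Finset.image (fun q => SBMaux.rr α' π' q w₀) univ) with hT
  have hT2 : T.card ≤ 2 * Q := by
    refine le_trans (Finset.card_union_le _ _) ?_
    have h1 := Finset.card_image_le (s := (univ : Finset (Fin Q)))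
      (f := fun q => SBMaux.rr α π q w₀)
    have h2 := Finset.card_image_le (s := (univ : Finset (Fin Q)))
      (f := fun q => SBMaux.rr α' π' q w₀)
    simp only [card_univ, Fintype.card_fin] at h1 h2
    omega
  have hmemT : ∀ q, SBMaux.rr α π q w₀ ∈ T :=
    fun q => mem_union_left _ (mem_image_of_mem _ (mem_univ q))
  have hmemT' : ∀ q, SBMaux.rr α' π' q w₀ ∈ T :=
    fun q => mem_union_right _ (mem_image_of_mem _ (mem_univ q))
  have hmom : ∀ j < T.card, ∑ t ∈ T,
      ((∑ q ∈ univ.filter (fun q => SBMaux.rr α π q w₀ = t), α q)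
        - ∑ q ∈ univ.filter (fun q => SBMaux.rr α' π' q w₀ = t), α' q) * t ^ j = 0 := by
    intro j hj
    simp only [sub_mul]
    rw [Finset.sum_sub_distrib, SBMaux.fiber_moment T _ hmemT α j,
      SBMaux.fiber_moment T _ hmemT' α' j, momentsA j (lt_of_lt_of_le hj hT2), sub_self]
  have hc := SBMaux.vandF T _ hmom
  have key : ∀ p, ∃ q, SBMaux.rr α π q w₀ = SBMaux.rr α' π' p w₀ ∧ α' p = α q := by
    intro p
    have h0 := hc _ (hmemT' p)
    have hfil' : univ.filter (fun q => SBMaux.rr α' π' q w₀ = SBMaux.rr α' π' p w₀) = {p} := by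
      ext q
      simp [(hinj' w₀).eq_iff]
    rw [hfil', Finset.sum_singleton] at h0
    have hsum : (∑ q ∈ univ.filter
        (fun q => SBMaux.rr α π q w₀ = SBMaux.rr α' π' p w₀), α q) = α' p := by linarith
    have hpos : 0 < ∑ q ∈ univ.filter
        (fun q => SBMaux.rr α π q w₀ = SBMaux.rr α' π' p w₀), α q := by
      rw [hsum]; exact hα'pos p
    have hne : (univ.filter
        (fun q => SBMaux.rr α π q w₀ = SBMaux.rr α' π' p w₀)).Nonempty := by
      by_contra h
      rw [Finset.not_nonempty_iff_eq_empty] at h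
      rw [h, Finset.sum_empty] at hpos
      exact lt_irrefl _ hpos
    obtain ⟨q, hq⟩ := hne
    have hq1 : SBMaux.rr α π q w₀ = SBMaux.rr α' π' p w₀ := (mem_filter.mp hq).2
    have hF1 : univ.filter (fun q' => SBMaux.rr α π q' w₀ = SBMaux.rr α' π' p w₀) = {q} := by
      ext q'
      simp only [mem_filter, mem_univ, true_and, mem_singleton]
      constructor
      · intro h'
        exact hinj w₀ (h'.trans hq1.symm)
      · rintro rfl
        exact hq1
    refine ⟨q, hq1, ?_⟩
    rw [← hsum, hF1, Finset.sum_singleton]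
  choose g hg1 hg2 using key
  have hginj : Function.Injective g := by
    intro p p' h
    apply hinj' w₀
    show SBMaux.rr α' π' p w₀ = SBMaux.rr α' π' p' w₀
    rw [← hg1 p, ← hg1 p', h]
  set σ : Equiv.Perm (Fin Q) :=
    Equiv.ofBijective g ((Fintype.bijective_iff_injective_and_card g).mpr ⟨hginj, rfl⟩) with hσdef
  have hσg : ∀ p, σ p = g p := fun p => rfl
  have hσα : ∀ p, α' p = α (σ p) := fun p => by rw [hσg p]; exact hg2 p
  -- Step 2 : all r-values are matched by σ
  have hσr : ∀ (w : Tie K) (p : Fin Q), SBMaux.rr α' π' p w = SBMaux.rr α π (σ p) w := by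
    intro w
    have mom : ∀ j, j < Q →
        (∑ q, α q * (SBMaux.rr α π q w * (SBMaux.rr α π q w₀) ^ j))
          = ∑ q, α' q * (SBMaux.rr α' π' q w * (SBMaux.rr α' π' q w₀) ^ j) := by
      intro j hj
      have hjle : j + 1 ≤ ((univ : Finset (Fin n)).erase a).card := by rw [hcard1]; omega
      obtain ⟨C, hCsub, hCcard⟩ := Finset.exists_subset_card_eq hjle
      have hCne : C.Nonempty := by
        rw [← Finset.card_pos, hCcard]; omega
      obtain ⟨i₀, hi₀⟩ := hCne
      have haC : a ∉ C := fun h => (mem_erase.mp (hCsub h)).1 rfl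
      have h := SBMaux.star1Eq α α' π π' hα1 hα1' hπ1 hπ1' hlikL a C haC
        (fun _ j' => if j' = i₀ then w else w₀)
      have hprod : ∀ (β : Fin Q → ℝ) (ρ : Fin Q → Fin Q → Tie K → ℝ) (q : Fin Q),
          (∏ i ∈ C, SBMaux.rr β ρ q (if i = i₀ then w else w₀))
            = SBMaux.rr β ρ q w * (SBMaux.rr β ρ q w₀) ^ j := by
        intro β ρ q
        rw [← Finset.insert_erase hi₀, Finset.prod_insert (Finset.notMem_erase _ _)]
        congr 1
        · simp
        · rw [Finset.prod_congr rfl (fun i hi => by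
              rw [if_neg (Finset.mem_erase.mp hi).1]), Finset.prod_const,
            Finset.card_erase_of_mem hi₀, hCcard]
          norm_num
      have h' : (∑ q, α q * ∏ i ∈ C, SBMaux.rr α π q (if i = i₀ then w else w₀))
          = ∑ q, α' q * ∏ i ∈ C, SBMaux.rr α' π' q (if i = i₀ then w else w₀) := h
      calc (∑ q, α q * (SBMaux.rr α π q w * (SBMaux.rr α π q w₀) ^ j))
          = ∑ q, α q * ∏ i ∈ C, SBMaux.rr α π q (if i = i₀ then w else w₀) :=
            Finset.sum_congr rfl fun q _ => by rw [hprod α π q]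
        _ = ∑ q, α' q * ∏ i ∈ C, SBMaux.rr α' π' q (if i = i₀ then w else w₀) := h'
        _ = ∑ q, α' q * (SBMaux.rr α' π' q w * (SBMaux.rr α' π' q w₀) ^ j) :=
            Finset.sum_congr rfl fun q _ => by rw [hprod α' π' q]
    have hvand := SBMaux.vand (fun q => SBMaux.rr α π q w₀) (hinj w₀)
      (fun q => α q * SBMaux.rr α π q w - α q * SBMaux.rr α' π' (σ.symm q) w) ?_
    · intro p
      have h0 := hvand (σ p)
      simp only [Equiv.symm_apply_apply] at h0
      have hαne : α (σ p) ≠ 0 := ne_of_gt (hαpos _)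
      have h1 : α (σ p) * SBMaux.rr α' π' p w = α (σ p) * SBMaux.rr α π (σ p) w := by
        linarith
      exact mul_left_cancel₀ hαne h1
    · intro j hj
      have hre : (∑ q, α' q * (SBMaux.rr α' π' q w * (SBMaux.rr α' π' q w₀) ^ j))
          = ∑ q, (α q * SBMaux.rr α' π' (σ.symm q) w) * (SBMaux.rr α π q w₀) ^ j := by
        rw [← Equiv.sum_comp σ
          (fun q => (α q * SBMaux.rr α' π' (σ.symm q) w) * (SBMaux.rr α π q w₀) ^ j)]
        refine Finset.sum_congr rfl fun p _ => ?_
        simp only [Equiv.symm_apply_apply]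
        rw [hσg p, ← hg2 p, hg1 p]
        ring
      calc ∑ q, (α q * SBMaux.rr α π q w - α q * SBMaux.rr α' π' (σ.symm q) w) *
              (SBMaux.rr α π q w₀) ^ j
          = (∑ q, α q * (SBMaux.rr α π q w * (SBMaux.rr α π q w₀) ^ j))
              - ∑ q, (α q * SBMaux.rr α' π' (σ.symm q) w) * (SBMaux.rr α π q w₀) ^ j := by
            rw [← Finset.sum_sub_distrib]
            exact Finset.sum_congr rfl fun q _ => by ring
        _ = 0 := by rw [mom j hj, hre, sub_self]
  -- Step 3 : connectivities are matched by σ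
  have hπeq : ∀ (w : Tie K) (q l : Fin Q), π' q l w = π (σ q) (σ l) w := by
    intro w
    have mom2 : ∀ i j, i < Q → j < Q →
        (∑ q, ∑ l, α q * α l * π q l w *
            (SBMaux.rr α π q w₀) ^ i * (SBMaux.rr α π l w₀) ^ j)
          = ∑ q, ∑ l, α' q * α' l * π' q l w *
              (SBMaux.rr α' π' q w₀) ^ i * (SBMaux.rr α' π' l w₀) ^ j := by
      intro i j hi hj
      have hijle : i + j ≤ (((univ : Finset (Fin n)).erase a).erase b).card := by
        rw [hcard2]; omega
      obtain ⟨C, hCsub, hCcard⟩ := Finset.exists_subset_card_eq hijle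
      obtain ⟨A, hAC, hAcard⟩ := Finset.exists_subset_card_eq
        (show i ≤ C.card by rw [hCcard]; omega)
      have hmemC : ∀ i' ∈ C, i' ≠ b ∧ i' ≠ a := fun i' h =>
        ⟨(mem_erase.mp (hCsub h)).1, (mem_erase.mp (mem_erase.mp (hCsub h)).2).1⟩
      have hBC : C \ A ⊆ C := Finset.sdiff_subset
      have hBcard : (C \ A).card = j := by
        rw [Finset.card_sdiff_of_subset hAC, hCcard, hAcard]; omega
      have hAB : Disjoint A (C \ A) := Finset.disjoint_sdiff
      have haA : a ∉ A := fun h => (hmemC _ (hAC h)).2 rfl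
      have hbA : b ∉ A := fun h => (hmemC _ (hAC h)).1 rfl
      have haB : a ∉ C \ A := fun h => (hmemC _ (hBC h)).2 rfl
      have hbB : b ∉ C \ A := fun h => (hmemC _ (hBC h)).1 rfl
      have h := SBMaux.star2Eq α α' π π' hα1 hα1' hπ1 hπ1' hlikL a b hab A (C \ A)
        haA hbA haB hbB hAB (fun _ q' => if q' = b then w else w₀)
      have hxab : (if b = b then w else w₀) = w := if_pos rfl
      have hprodA : ∀ (β : Fin Q → ℝ) (ρ : Fin Q → Fin Q → Tie K → ℝ) (q : Fin Q),
          (∏ i' ∈ A, SBMaux.rr β ρ q (if i' = b then w else w₀))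
            = (SBMaux.rr β ρ q w₀) ^ i := by
        intro β ρ q
        rw [Finset.prod_congr rfl (fun i' hi' => by
            rw [if_neg (hmemC _ (hAC hi')).1]), Finset.prod_const, hAcard]
      have hprodB : ∀ (β : Fin Q → ℝ) (ρ : Fin Q → Fin Q → Tie K → ℝ) (q : Fin Q),
          (∏ i' ∈ C \ A, SBMaux.rr β ρ q (if i' = b then w else w₀))
            = (SBMaux.rr β ρ q w₀) ^ j := by
        intro β ρ q
        rw [Finset.prod_congr rfl (fun i' hi' => by
            rw [if_neg (hmemC _ (hBC hi')).1]), Finset.prod_const, hBcard]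
      have h' : (∑ q, ∑ l, α q * α l * π q l w *
            (∏ i' ∈ A, SBMaux.rr α π q (if i' = b then w else w₀)) *
            (∏ i' ∈ C \ A, SBMaux.rr α π l (if i' = b then w else w₀)))
          = ∑ q, ∑ l, α' q * α' l * π' q l w *
              (∏ i' ∈ A, SBMaux.rr α' π' q (if i' = b then w else w₀)) *
              (∏ i' ∈ C \ A, SBMaux.rr α' π' l (if i' = b then w else w₀)) := by
        have := h
        simp only [hxab] at this
        exact this
      calc (∑ q, ∑ l, α q * α l * π q l w *
              (SBMaux.rr α π q w₀) ^ i * (SBMaux.rr α π l w₀) ^ j)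
          = ∑ q, ∑ l, α q * α l * π q l w *
              (∏ i' ∈ A, SBMaux.rr α π q (if i' = b then w else w₀)) *
              (∏ i' ∈ C \ A, SBMaux.rr α π l (if i' = b then w else w₀)) :=
            Finset.sum_congr rfl fun q _ => Finset.sum_congr rfl fun l _ => by
              rw [hprodA α π q, hprodB α π l]
        _ = ∑ q, ∑ l, α' q * α' l * π' q l w *
              (∏ i' ∈ A, SBMaux.rr α' π' q (if i' = b then w else w₀)) *
              (∏ i' ∈ C \ A, SBMaux.rr α' π' l (if i' = b then w else w₀)) := h'
        _ = ∑ q, ∑ l, α' q * α' l * π' q l w *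
              (SBMaux.rr α' π' q w₀) ^ i * (SBMaux.rr α' π' l w₀) ^ j :=
            Finset.sum_congr rfl fun q _ => Finset.sum_congr rfl fun l _ => by
              rw [hprodA α' π' q, hprodB α' π' l]
    have hmomD : ∀ i j, i < Q → j < Q →
        ∑ q, ∑ l, (α q * α l * π q l w - α q * α l * π' (σ.symm q) (σ.symm l) w) *
          (SBMaux.rr α π q w₀) ^ i * (SBMaux.rr α π l w₀) ^ j = 0 := by
      intro i j hi hj
      have hre : (∑ q, ∑ l, α' q * α' l * π' q l w *
            (SBMaux.rr α' π' q w₀) ^ i * (SBMaux.rr α' π' l w₀) ^ j)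
          = ∑ q, ∑ l, α q * α l * π' (σ.symm q) (σ.symm l) w *
              (SBMaux.rr α π q w₀) ^ i * (SBMaux.rr α π l w₀) ^ j := by
        rw [← Equiv.sum_comp σ (fun q => ∑ l, α q * α l * π' (σ.symm q) (σ.symm l) w *
          (SBMaux.rr α π q w₀) ^ i * (SBMaux.rr α π l w₀) ^ j)]
        refine Finset.sum_congr rfl fun p _ => ?_
        rw [← Equiv.sum_comp σ (fun l => α (σ p) * α l * π' (σ.symm (σ p)) (σ.symm l) w *
          (SBMaux.rr α π (σ p) w₀) ^ i * (SBMaux.rr α π l w₀) ^ j)]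
        refine Finset.sum_congr rfl fun p' _ => ?_
        simp only [Equiv.symm_apply_apply]
        rw [hσg p, hσg p', ← hg2 p, ← hg2 p', hg1 p, hg1 p']
      calc ∑ q, ∑ l, (α q * α l * π q l w - α q * α l * π' (σ.symm q) (σ.symm l) w) *
              (SBMaux.rr α π q w₀) ^ i * (SBMaux.rr α π l w₀) ^ j
          = (∑ q, ∑ l, α q * α l * π q l w *
              (SBMaux.rr α π q w₀) ^ i * (SBMaux.rr α π l w₀) ^ j)
            - ∑ q, ∑ l, α q * α l * π' (σ.symm q) (σ.symm l) w *
                (SBMaux.rr α π q w₀) ^ i * (SBMaux.rr α π l w₀) ^ j := by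
            rw [← Finset.sum_sub_distrib]
            refine Finset.sum_congr rfl fun q _ => ?_
            rw [← Finset.sum_sub_distrib]
            exact Finset.sum_congr rfl fun l _ => by ring
        _ = 0 := by rw [mom2 i j hi hj, hre, sub_self]
    have hrow : ∀ j, j < Q → ∀ q, ∑ l,
        (α q * α l * π q l w - α q * α l * π' (σ.symm q) (σ.symm l) w) *
          (SBMaux.rr α π l w₀) ^ j = 0 := by
      intro j hj
      refine SBMaux.vand (fun q => SBMaux.rr α π q w₀) (hinj w₀)
        (fun q => ∑ l, (α q * α l * π q l w - α q * α l * π' (σ.symm q) (σ.symm l) w) *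
          (SBMaux.rr α π l w₀) ^ j) (fun i hi => ?_)
      calc ∑ q, (∑ l, (α q * α l * π q l w - α q * α l * π' (σ.symm q) (σ.symm l) w) *
              (SBMaux.rr α π l w₀) ^ j) * (SBMaux.rr α π q w₀) ^ i
          = ∑ q, ∑ l, (α q * α l * π q l w - α q * α l * π' (σ.symm q) (σ.symm l) w) *
              (SBMaux.rr α π q w₀) ^ i * (SBMaux.rr α π l w₀) ^ j := by
            refine Finset.sum_congr rfl fun q _ => ?_
            rw [Finset.sum_mul]
            exact Finset.sum_congr rfl fun l _ => by ring
        _ = 0 := hmomD i j hi hj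
    have hDzero : ∀ q l,
        α q * α l * π q l w - α q * α l * π' (σ.symm q) (σ.symm l) w = 0 := by
      intro q
      exact SBMaux.vand (fun l => SBMaux.rr α π l w₀) (hinj w₀)
        (fun l => α q * α l * π q l w - α q * α l * π' (σ.symm q) (σ.symm l) w)
        (fun j hj => hrow j hj q)
    intro q l
    have h0 := hDzero (σ q) (σ l)
    simp only [Equiv.symm_apply_apply] at h0
    have hne : α (σ q) * α (σ l) ≠ 0 := ne_of_gt (mul_pos (hαpos _) (hαpos _))
    have h1 : α (σ q) * α (σ l) * π' q l w = α (σ q) * α (σ l) * π (σ q) (σ l) w := by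
      linarith
    exact mul_left_cancel₀ hne h1
  exact ⟨σ, hσα, hπeq⟩
end

section
/- Let Q ≥ 1, and let r_1, …, r_Q and α_1, …, α_Q be arbitrary real numbers. Set u_m = Σ_{q=1}^Q α_q r_q^m, let M be the (Q+1) × Q matrix with entries M_{ij} = u_{i+j} for 0 ≤ i ≤ Q and 0 ≤ j ≤ Q − 1, and for each 0 ≤ i ≤ Q let M^i denote the Q × Q matrix obtained from M by deleting its row of index i. Define the polynomial B(x) = Σ_{i=0}^{Q} (−1)^{i+Q} det(M^i) x^i. Then B(r_k) = 0 for every k ∈ {1, …, Q}. -/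
open Finset

/-- Let `u_m = Σ_q α_q r_q^m`, let `M` be the `(Q+1) × Q` matrix `M_ij = u_{i+j}`
(rows indexed by `0 ≤ i ≤ Q`, columns by `0 ≤ j ≤ Q−1`) and, for `0 ≤ i ≤ Q`, let
`M^i` be the `Q × Q` matrix obtained from `M` by deleting row `i` (its rows are the
rows `i.succAbove a`, `a : Fin Q`, of `M`).  Then the polynomial
`B(x) = Σ_{i=0}^Q (−1)^{i+Q} det(M^i) x^i` vanishes at every `r_k`. -/
theorem B_vanishes_at_r
    (Q : ℕ) (hQ : 1 ≤ Q) (r α : Fin Q → ℝ) (k : Fin Q) :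
    ∑ i : Fin (Q + 1),
      (-1 : ℝ) ^ ((i : ℕ) + Q) *
        Matrix.det (Matrix.of fun a b : Fin Q =>
          ∑ q, α q * r q ^ (((i.succAbove a : Fin (Q + 1)) : ℕ) + (b : ℕ))) *
        r k ^ (i : ℕ) = 0 := by
  -- the big (Q+1)×(Q+1) matrix: first Q columns are M, last column is (r_k ^ i)
  set A : Matrix (Fin (Q + 1)) (Fin (Q + 1)) ℝ :=
    Matrix.of (fun i j =>
      if h : (j : ℕ) < Q then ∑ q, α q * r q ^ ((i : ℕ) + (j : ℕ))
      else r k ^ (i : ℕ)) with hA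
  set W : Matrix (Fin (Q + 1)) (Fin (Q + 1)) ℝ :=
    Matrix.of (fun i j => if h : (j : ℕ) < Q then r ⟨j, h⟩ ^ (i : ℕ) else 0) with hW
  set C : Matrix (Fin (Q + 1)) (Fin (Q + 1)) ℝ :=
    Matrix.of (fun q j =>
      if hq : (q : ℕ) < Q then
        (if (j : ℕ) < Q then α ⟨q, hq⟩ * r ⟨q, hq⟩ ^ (j : ℕ)
         else if (⟨q, hq⟩ : Fin Q) = k then 1 else 0)
      else 0) with hC
  have hAWC : A = W * C := by
    ext i j
    simp only [hA, hW, hC, Matrix.mul_apply, Matrix.of_apply]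
    rw [Fin.sum_univ_castSucc]
    simp only [Fin.coe_castSucc, Fin.is_lt, dite_true, Fin.val_last, lt_irrefl, dite_false,
      zero_mul, add_zero, Fin.eta]
    by_cases h : (j : ℕ) < Q
    · simp only [dif_pos h, if_pos h]
      refine Finset.sum_congr rfl fun q _ => ?_
      rw [pow_add]; ring
    · simp only [dif_neg h, if_neg h, mul_ite, mul_one, mul_zero, Fin.eta]
      simp
  have hdetA : A.det = 0 := by
    rw [hAWC, Matrix.det_mul]
    have : W.det = 0 := by
      apply Matrix.det_eq_zero_of_column_eq_zero (Fin.last Q)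
      intro i
      simp [hW]
    rw [this, zero_mul]
  have hexp := Matrix.det_succ_column A (Fin.last Q)
  rw [hdetA] at hexp
  rw [← hexp.symm]
  · refine Finset.sum_congr rfl fun i _ => ?_
    have h1 : A i (Fin.last Q) = r k ^ (i : ℕ) := by simp [hA]
    have h2 : (A.submatrix i.succAbove (Fin.last Q).succAbove) =
        Matrix.of fun a b : Fin Q =>
          ∑ q, α q * r q ^ (((i.succAbove a : Fin (Q + 1)) : ℕ) + (b : ℕ)) := by
      ext a b
      simp [hA, Fin.succAbove_last]
    rw [h1, h2]
    simp [Fin.val_last]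
    ring
end

section
/- Let Q ≥ 1, let r_1, …, r_Q be pairwise distinct real numbers and α_1, …, α_Q strictly positive real numbers. With u_m = Σ_{q=1}^Q α_q r_q^m, M the (Q+1) × Q matrix M_{ij} = u_{i+j} (0 ≤ i ≤ Q, 0 ≤ j ≤ Q−1), M^i the Q × Q matrix obtained by deleting row i of M, and B(x) = Σ_{i=0}^{Q} (−1)^{i+Q} det(M^i) x^i, the polynomial B factorizes as B(x) = det(M^Q) · ∏_{q=1}^{Q} (x − r_q), where det(M^Q) > 0. -/
/-!
Expanding along its last column, `B(x)` is the determinant of the Hankel moment matrix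
`M^Q = (u_{a+b})` bordered by the column `(x^i)_i`. Writing `V(v)` for the Vandermonde matrix,
`M^Q = V(r)ᵀ · diag α · V(r)`, and the bordered matrix factors as `V(r_1, …, r_Q, x)ᵀ` times the
block matrix `diag α · V(r) ⊕ 1`. Hence `B(x) = det V(r) ∏_q (x - r_q) · ∏_q α_q det V(r)`,
which is `det(M^Q) ∏_q (x - r_q)`; and `det(M^Q) = ∏_q α_q · det V(r)^2 > 0` as the `r_q` are distinct.
-/

open Finset Matrix

theorem Fin.prod_Ioi_castSucc {M : Type*} [CommMonoid M] {n : ℕ} (f : Fin (n + 1) → M)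
    (i : Fin n) : ∏ j ∈ Ioi i.castSucc, f j = (∏ j ∈ Ioi i, f j.castSucc) * f (Fin.last n) := by
  rw [Ioi_eq_Ioc, Fin.top_eq_last, ← Ioo_insert_right (Fin.castSucc_lt_last i),
    prod_insert (by simp), ← Fin.map_castSuccEmb_Ioi, prod_map, mul_comm]
  rfl

namespace Matrix

variable {R : Type*} [CommRing R] {n : ℕ}

theorem det_vandermonde_snoc (v : Fin n → R) (x : R) :
    (vandermonde (Fin.snoc v x : Fin (n + 1) → R)).det = (vandermonde v).det * ∏ i, (x - v i) := by
  rw [det_vandermonde, det_vandermonde, Fin.prod_univ_castSucc, ← Fin.top_eq_last, Ioi_top]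
  simp [Fin.prod_Ioi_castSucc, prod_mul_distrib]

theorem det_of_snoc_single_last (A : Fin n → Fin (n + 1) → R) :
    (of (Fin.snoc A (Pi.single (Fin.last n) 1))).det = (of fun i j => A i j.castSucc).det := by
  rw [det_succ_row _ (Fin.last n), Fintype.sum_eq_single (Fin.last n)]
  · simp only [of_apply, Fin.snoc_last, Pi.single_eq_same, Fin.val_last, ← two_mul, pow_mul,
      neg_one_sq, one_pow, one_mul, Fin.succAbove_last]
    congr 1
    ext
    simp
  · intro j hj
    simp [hj]

theorem hankel_moments_eq_vandermonde_transpose_mul (α r : Fin n → R) :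
    (of fun a b : Fin n => ∑ q, α q * r q ^ ((a : ℕ) + b)) =
      (vandermonde r)ᵀ * diagonal α * vandermonde r := by
  ext a b
  rw [mul_apply]
  simp only [of_apply, mul_diagonal, transpose_apply, vandermonde_apply, pow_add]
  exact sum_congr rfl fun q _ => by ring

theorem det_hankel_moments (α r : Fin n → R) :
    (of fun a b : Fin n => ∑ q, α q * r q ^ ((a : ℕ) + b)).det =
      (∏ q, α q) * (vandermonde r).det ^ 2 := by
  rw [hankel_moments_eq_vandermonde_transpose_mul, det_mul, det_mul, det_transpose, det_diagonal]
  ring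

theorem det_hankel_moments_pos {R : Type*} [CommRing R] [LinearOrder R] [IsStrictOrderedRing R]
    {α r : Fin n → R} (hα : ∀ q, 0 < α q) (hr : Function.Injective r) :
    0 < (of fun a b : Fin n => ∑ q, α q * r q ^ ((a : ℕ) + b)).det := by
  rw [det_hankel_moments]
  exact mul_pos (prod_pos fun q _ => hα q)
    (pow_two_pos_of_ne_zero (det_vandermonde_ne_zero_iff.2 hr))

def borderedHankelMoments (α r : Fin n → R) (x : R) : Matrix (Fin (n + 1)) (Fin (n + 1)) R :=
  of fun i => Fin.snoc (fun b : Fin n => ∑ q, α q * r q ^ ((i : ℕ) + b)) (x ^ (i : ℕ))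

theorem det_borderedHankelMoments_eq_sum (α r : Fin n → R) (x : R) :
    (borderedHankelMoments α r x).det = ∑ i : Fin (n + 1), (-1) ^ ((i : ℕ) + n) *
      (of fun a b : Fin n => ∑ q, α q * r q ^ ((i.succAbove a : ℕ) + b)).det * x ^ (i : ℕ) := by
  rw [det_succ_column _ (Fin.last n)]
  refine sum_congr rfl fun i _ => ?_
  have hminor : (borderedHankelMoments α r x).submatrix i.succAbove (Fin.last n).succAbove =
      of fun a b : Fin n => ∑ q, α q * r q ^ ((i.succAbove a : ℕ) + b) := by
    ext a b
    simp [borderedHankelMoments, Fin.succAbove_last]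
  rw [hminor, Fin.val_last]
  simp only [borderedHankelMoments, of_apply, Fin.snoc_last]
  ring

theorem borderedHankelMoments_eq_mul (α r : Fin n → R) (x : R) :
    borderedHankelMoments α r x = (vandermonde (Fin.snoc r x : Fin (n + 1) → R))ᵀ *
      of (Fin.snoc (fun q => Fin.snoc (fun b : Fin n => α q * r q ^ (b : ℕ)) 0)
        (Pi.single (Fin.last n) 1)) := by
  ext i j
  rw [mul_apply, Fin.sum_univ_castSucc]
  refine Fin.lastCases ?_ (fun b => ?_) j
  · simp [borderedHankelMoments]
  · simp only [borderedHankelMoments, pow_add, of_apply, Fin.snoc_castSucc, transpose_apply,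
      vandermonde_apply, Fin.snoc_last, Fin.castSucc_ne_last, ne_eq, not_false_eq_true,
      Pi.single_eq_of_ne, mul_zero, add_zero]
    exact sum_congr rfl fun q _ => by ring

theorem det_borderedHankelMoments (α r : Fin n → R) (x : R) :
    (borderedHankelMoments α r x).det =
      (of fun a b : Fin n => ∑ q, α q * r q ^ ((a : ℕ) + b)).det * ∏ q, (x - r q) := by
  have hblock : (of fun q b : Fin n => Fin.snoc (α := fun _ => R)
      (fun b : Fin n => α q * r q ^ (b : ℕ)) 0 b.castSucc) = diagonal α * vandermonde r := by
    ext
    simp [diagonal_mul]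
  rw [borderedHankelMoments_eq_mul, det_mul, det_transpose, det_vandermonde_snoc,
    det_of_snoc_single_last, hblock, det_mul, det_diagonal, det_hankel_moments]
  ring

end Matrix

theorem B_factorization_general
    (Q : ℕ) (r α : Fin Q → ℝ)
    (hr : Function.Injective r) (hα : ∀ q, 0 < α q) :
    (∀ x : ℝ,
      (∑ i : Fin (Q + 1),
        (-1 : ℝ) ^ ((i : ℕ) + Q) *
          Matrix.det (Matrix.of fun a b : Fin Q =>
            ∑ q, α q * r q ^ (((i.succAbove a : Fin (Q + 1)) : ℕ) + (b : ℕ))) *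
          x ^ (i : ℕ)) =
      Matrix.det (Matrix.of fun a b : Fin Q =>
          ∑ q, α q * r q ^ ((a : ℕ) + (b : ℕ))) *
        ∏ q, (x - r q)) ∧
    0 < Matrix.det (Matrix.of fun a b : Fin Q =>
        ∑ q, α q * r q ^ ((a : ℕ) + (b : ℕ))) := by
  refine ⟨fun x => ?_, det_hankel_moments_pos hα hr⟩
  rw [← det_borderedHankelMoments_eq_sum, det_borderedHankelMoments]

/-- Let `u_m = Σ_q α_q r_q^m` with `r_1, …, r_Q` pairwise distinct and `α_q > 0`,
let `M` be the `(Q+1) × Q` matrix `M_ij = u_{i+j}`, `M^i` the `Q × Q` matrix obtained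
by deleting row `i` of `M` (rows `i.succAbove a`), and
`B(x) = Σ_{i=0}^Q (−1)^{i+Q} det(M^i) x^i`.  Then `B` factorizes as
`B(x) = det(M^Q) ∏_q (x − r_q)`, where `M^Q = (u_{a+b})_{0 ≤ a,b ≤ Q−1}` and
`det(M^Q) > 0`. -/
theorem B_factorization
    (Q : ℕ) (hQ : 1 ≤ Q) (r α : Fin Q → ℝ)
    (hr : Function.Injective r) (hα : ∀ q, 0 < α q) :
    (∀ x : ℝ,
      (∑ i : Fin (Q + 1),
        (-1 : ℝ) ^ ((i : ℕ) + Q) *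
          Matrix.det (Matrix.of fun a b : Fin Q =>
            ∑ q, α q * r q ^ (((i.succAbove a : Fin (Q + 1)) : ℕ) + (b : ℕ))) *
          x ^ (i : ℕ)) =
      Matrix.det (Matrix.of fun a b : Fin Q =>
          ∑ q, α q * r q ^ ((a : ℕ) + (b : ℕ))) *
        ∏ q, (x - r q)) ∧
    0 < Matrix.det (Matrix.of fun a b : Fin Q =>
        ∑ q, α q * r q ^ ((a : ℕ) + (b : ℕ))) :=
  B_factorization_general Q r α hr hα
end

section
/- Fixed-point characterization of the E-step of the variational EM for the multiplex SBM: fix a parameter θ = (α, π) with all α_q > 0 and all π_{ql}^{(w)} > 0, and an observation x = (x_{ij})_{i≠j} with x_{ij} ∈ {0,1}^K. Suppose τ̂ = (τ̂_{iq}) ∈ (Δ_Q)^n has all entries strictly positive and maximizes τ ↦ I(x; τ, α, π) over (Δ_Q)^n, where I(x; τ, α, π) = Σ_{i≠j} Σ_{q,l} τ_{iq} τ_{jl} log π_{ql}^{(x_{ij})} − Σ_{i,q} τ_{iq}(log τ_{iq} − log α_q). Then for each i ∈ {1,…,n} there exists a constant c_i > 0 such that for all q, τ̂_{iq} = c_i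 · α_q · ∏_{j ≠ i} ∏_{l=1}^Q ( π_{ql}^{(x_{ij})} π_{lq}^{(x_{ji})} )^{τ̂_{jl}}. -/
open Finset

/-- The variational criterion
`I(x; τ, α, π) = Σ_{i≠j} Σ_{q,l} τ_iq τ_jl log π_ql^{(x_ij)}
  − Σ_{i,q} τ_iq (log τ_iq − log α_q)`. -/
noncomputable def varCrit {n Q K : ℕ} (x : MGraph n K) (τ : Fin n → Fin Q → ℝ)
    (α : Fin Q → ℝ) (π : Fin Q → Fin Q → Tie K → ℝ) : ℝ :=
  (∑ p ∈ (univ : Finset (Fin n)).offDiag, ∑ q, ∑ l,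
      τ p.1 q * τ p.2 l * Real.log (π q l (x p.1 p.2)))
  - ∑ i, ∑ q, τ i q * (Real.log (τ i q) - Real.log (α q))


lemma sum_offDiag_eq {n : ℕ} (f : Fin n × Fin n → ℝ) :
    ∑ p ∈ (univ : Finset (Fin n)).offDiag, f p
      = ∑ a, ∑ b ∈ (univ : Finset (Fin n)).erase a, f (a, b) := by
  have h1 : ∑ p ∈ (univ : Finset (Fin n)) ×ˢ univ, f p
      = (∑ p ∈ (univ : Finset (Fin n)).diag, f p)
        + ∑ p ∈ (univ : Finset (Fin n)).offDiag, f p := by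
    rw [← Finset.sum_union (Finset.disjoint_diag_offDiag _), Finset.diag_union_offDiag]
  have h2 : ∑ p ∈ (univ : Finset (Fin n)) ×ˢ univ, f p = ∑ a, ∑ b, f (a, b) :=
    Finset.sum_product _ _ _
  have h3 : ∑ p ∈ (univ : Finset (Fin n)).diag, f p = ∑ a, f (a, a) :=
    Finset.sum_diag _ _
  have h4 : ∀ a : Fin n, ∑ b, f (a, b) = f (a, a) + ∑ b ∈ univ.erase a, f (a, b) :=
    fun a => (Finset.add_sum_erase _ _ (mem_univ a)).symm
  have := h1
  rw [h2, h3] at this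
  simp_rw [h4, Finset.sum_add_distrib] at this
  linarith

lemma decomp {n Q K : ℕ} (x : MGraph n K) (τ : Fin n → Fin Q → ℝ)
    (α : Fin Q → ℝ) (π : Fin Q → Fin Q → Tie K → ℝ) (i : Fin n) :
    ∃ C : ℝ, ∀ t : Fin Q → ℝ,
      varCrit x (Function.update τ i t) α π
        = (∑ q, t q * ((Real.log (α q) + ∑ j ∈ (univ : Finset (Fin n)).erase i, ∑ l,
              τ j l * (Real.log (π q l (x i j)) + Real.log (π l q (x j i))))
            - Real.log (t q))) + C := by
  classical
  refine ⟨(∑ a ∈ (univ : Finset (Fin n)).erase i, ∑ b ∈ ((univ : Finset (Fin n)).erase a).erase i,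
      ∑ q, ∑ l, τ a q * τ b l * Real.log (π q l (x a b)))
    - ∑ j ∈ (univ : Finset (Fin n)).erase i, ∑ q,
        τ j q * (Real.log (τ j q) - Real.log (α q)), fun t => ?_⟩
  set σ := Function.update τ i t with hσ
  have hσi : σ i = t := Function.update_self i t τ
  have hσj : ∀ j : Fin n, j ≠ i → σ j = τ j := fun j hj => Function.update_of_ne hj t τ
  have key : (∑ p ∈ (univ : Finset (Fin n)).offDiag, ∑ q, ∑ l,
      σ p.1 q * σ p.2 l * Real.log (π q l (x p.1 p.2)))
      = (∑ b ∈ (univ : Finset (Fin n)).erase i, ∑ q, ∑ l,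
          t q * τ b l * Real.log (π q l (x i b)))
        + ((∑ a ∈ (univ : Finset (Fin n)).erase i, ∑ q, ∑ l,
          τ a q * t l * Real.log (π q l (x a i)))
        + ∑ a ∈ (univ : Finset (Fin n)).erase i, ∑ b ∈ ((univ : Finset (Fin n)).erase a).erase i,
          ∑ q, ∑ l, τ a q * τ b l * Real.log (π q l (x a b))) := by
    rw [sum_offDiag_eq (fun p => ∑ q, ∑ l, σ p.1 q * σ p.2 l * Real.log (π q l (x p.1 p.2)))]
    rw [← Finset.add_sum_erase _ _ (mem_univ i)]
    congr 1
    · refine Finset.sum_congr rfl fun b hb => ?_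
      have hb' : b ≠ i := Finset.ne_of_mem_erase hb
      simp [hσi, hσj b hb']
    · rw [← Finset.sum_add_distrib]
      refine Finset.sum_congr rfl fun a ha => ?_
      have ha' : a ≠ i := Finset.ne_of_mem_erase ha
      have hi : i ∈ (univ : Finset (Fin n)).erase a := by
        simp [Ne.symm ha']
      rw [← Finset.add_sum_erase _ _ hi]
      congr 1
      · simp [hσi, hσj a ha']
      · refine Finset.sum_congr rfl fun b hb => ?_
        have hb1 : b ≠ i := Finset.ne_of_mem_erase hb
        have hb2 : b ≠ a := Finset.ne_of_mem_erase (Finset.mem_of_mem_erase hb)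
        simp [hσj a ha', hσj b hb1]
  have ent : (∑ j, ∑ q, σ j q * (Real.log (σ j q) - Real.log (α q)))
      = (∑ q, t q * (Real.log (t q) - Real.log (α q)))
        + ∑ j ∈ (univ : Finset (Fin n)).erase i, ∑ q,
            τ j q * (Real.log (τ j q) - Real.log (α q)) := by
    rw [← Finset.add_sum_erase _ _ (mem_univ i)]
    congr 1
    · simp [hσi]
    · refine Finset.sum_congr rfl fun j hj => ?_
      rw [hσj j (Finset.ne_of_mem_erase hj)]
  have lin1 : (∑ b ∈ (univ : Finset (Fin n)).erase i, ∑ q, ∑ l,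
      t q * τ b l * Real.log (π q l (x i b)))
      = ∑ q, t q * ∑ j ∈ (univ : Finset (Fin n)).erase i, ∑ l,
          τ j l * Real.log (π q l (x i j)) := by
    rw [Finset.sum_comm]
    refine Finset.sum_congr rfl fun q _ => ?_
    rw [Finset.mul_sum]
    refine Finset.sum_congr rfl fun j _ => ?_
    rw [Finset.mul_sum]
    refine Finset.sum_congr rfl fun l _ => ?_
    ring
  have lin2 : (∑ a ∈ (univ : Finset (Fin n)).erase i, ∑ q, ∑ l,
      τ a q * t l * Real.log (π q l (x a i)))
      = ∑ q, t q * ∑ j ∈ (univ : Finset (Fin n)).erase i, ∑ l,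
          τ j l * Real.log (π l q (x j i)) := by
    have : ∀ a ∈ (univ : Finset (Fin n)).erase i, (∑ q, ∑ l, τ a q * t l * Real.log (π q l (x a i)))
        = ∑ q, t q * ∑ l, τ a l * Real.log (π l q (x a i)) := by
      intro a _
      rw [Finset.sum_comm]
      refine Finset.sum_congr rfl fun q _ => ?_
      rw [Finset.mul_sum]
      refine Finset.sum_congr rfl fun l _ => ?_
      ring
    rw [Finset.sum_congr rfl this, Finset.sum_comm]
    refine Finset.sum_congr rfl fun q _ => ?_
    rw [Finset.mul_sum]
  rw [varCrit, key, ent, lin1, lin2]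
  have expand : ∀ q : Fin Q,
      t q * ((Real.log (α q) + ∑ j ∈ (univ : Finset (Fin n)).erase i, ∑ l,
          τ j l * (Real.log (π q l (x i j)) + Real.log (π l q (x j i)))) - Real.log (t q))
      = t q * (∑ j ∈ (univ : Finset (Fin n)).erase i, ∑ l, τ j l * Real.log (π q l (x i j)))
        + t q * (∑ j ∈ (univ : Finset (Fin n)).erase i, ∑ l, τ j l * Real.log (π l q (x j i)))
        - t q * (Real.log (t q) - Real.log (α q)) := by
    intro q
    have : (∑ j ∈ (univ : Finset (Fin n)).erase i, ∑ l,
        τ j l * (Real.log (π q l (x i j)) + Real.log (π l q (x j i))))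
        = (∑ j ∈ (univ : Finset (Fin n)).erase i, ∑ l, τ j l * Real.log (π q l (x i j)))
          + (∑ j ∈ (univ : Finset (Fin n)).erase i, ∑ l, τ j l * Real.log (π l q (x j i))) := by
      rw [← Finset.sum_add_distrib]
      refine Finset.sum_congr rfl fun j _ => ?_
      rw [← Finset.sum_add_distrib]
      refine Finset.sum_congr rfl fun l _ => ?_
      ring
    rw [this]; ring
  simp_rw [expand]
  rw [Finset.sum_sub_distrib, Finset.sum_add_distrib]
  ring

/-- Fixed-point characterization of the E-step of the variational EM for the multiplex
SBM: an interior maximizer `τ̂` of `τ ↦ I(x; τ, α, π)` over `(Δ_Q)ⁿ` satisfies, for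
each node `i`, `τ̂_iq = c_i · α_q · ∏_{j≠i} ∏_l (π_ql^{(x_ij)} π_lq^{(x_ji)})^{τ̂_jl}`
for some constant `c_i > 0`. -/
theorem estep_fixed_point
    (n Q K : ℕ) (hn : 1 ≤ n) (hQ : 1 ≤ Q) (hK : 1 ≤ K)
    (α : Fin Q → ℝ) (π : Fin Q → Fin Q → Tie K → ℝ)
    (hα : ∀ q, 0 < α q) (hαs : ∑ q, α q = 1)
    (hπ : ∀ q l w, 0 < π q l w) (hπs : ∀ q l, ∑ w, π q l w = 1)
    (x : MGraph n K)
    (τ : Fin n → Fin Q → ℝ) (hτ : ∀ i q, 0 < τ i q) (hτs : ∀ i, ∑ q, τ i q = 1)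
    (hmax : ∀ τ' : Fin n → Fin Q → ℝ, (∀ i q, 0 ≤ τ' i q) → (∀ i, ∑ q, τ' i q = 1) →
      varCrit x τ' α π ≤ varCrit x τ α π) :
    ∀ i : Fin n, ∃ c : ℝ, 0 < c ∧ ∀ q : Fin Q,
      τ i q = c * α q *
        ∏ j ∈ (univ : Finset (Fin n)).erase i, ∏ l,
          (π q l (x i j) * π l q (x j i)) ^ τ j l := by
  classical
  intro i
  haveI : Nonempty (Fin Q) := ⟨⟨0, hQ⟩⟩
  obtain ⟨C, hC⟩ := decomp x τ α π i
  set A : Fin Q → ℝ := fun q => ∑ j ∈ (univ : Finset (Fin n)).erase i, ∑ l,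
      τ j l * (Real.log (π q l (x i j)) + Real.log (π l q (x j i))) with hA
  set B : Fin Q → ℝ := fun q => Real.log (α q) + A q with hB
  have hC' : ∀ t : Fin Q → ℝ, varCrit x (Function.update τ i t) α π
      = (∑ q, t q * (B q - Real.log (t q))) + C := fun t => hC t
  set Z : ℝ := ∑ q, Real.exp (B q) with hZdef
  have hZ : 0 < Z := Finset.sum_pos (fun q _ => Real.exp_pos _) Finset.univ_nonempty
  set p : Fin Q → ℝ := fun q => Real.exp (B q) / Z with hpdef
  have hp : ∀ q, 0 < p q := fun q => div_pos (Real.exp_pos _) hZ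
  have hps : ∑ q, p q = 1 := by
    rw [hpdef]; rw [← Finset.sum_div, ← hZdef, div_self hZ.ne']
  have hlogp : ∀ q, Real.log (p q) = B q - Real.log Z := by
    intro q
    rw [hpdef]
    rw [Real.log_div (Real.exp_ne_zero _) hZ.ne', Real.log_exp]
  -- the candidate is admissible
  have hτ'0 : ∀ j q, 0 ≤ Function.update τ i p j q := by
    intro j q
    rcases eq_or_ne j i with rfl | hj
    · rw [Function.update_self]; exact (hp q).le
    · rw [Function.update_of_ne hj]; exact (hτ j q).le
  have hτ's : ∀ j, ∑ q, Function.update τ i p j q = 1 := by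
    intro j
    rcases eq_or_ne j i with rfl | hj
    · rw [Function.update_self]; exact hps
    · rw [Function.update_of_ne hj]; exact hτs j
  have hle : varCrit x (Function.update τ i p) α π ≤ varCrit x τ α π :=
    hmax _ hτ'0 hτ's
  have hself : varCrit x τ α π = varCrit x (Function.update τ i (τ i)) α π := by
    rw [Function.update_eq_self]
  have hhp : (∑ q, p q * (B q - Real.log (p q))) = Real.log Z := by
    have : ∀ q : Fin Q, p q * (B q - Real.log (p q)) = p q * Real.log Z := by
      intro q; rw [hlogp q]; ring
    rw [Finset.sum_congr rfl fun q _ => this q, ← Finset.sum_mul, hps, one_mul]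
  have hmain : Real.log Z ≤ ∑ q, τ i q * (B q - Real.log (τ i q)) := by
    have h1 := hC' p
    have h2 := hC' (τ i)
    rw [hself, h2, h1, hhp] at hle
    linarith
  -- Gibbs equality argument
  set f : Fin Q → ℝ := fun q => τ i q * Real.log (p q / τ i q) with hf
  set g : Fin Q → ℝ := fun q => p q - τ i q with hg
  have hfg : ∀ q ∈ (univ : Finset (Fin Q)), f q ≤ g q := by
    intro q _
    have hy : 0 < p q / τ i q := div_pos (hp q) (hτ i q)
    have := Real.log_le_sub_one_of_pos hy
    have h3 : τ i q * Real.log (p q / τ i q) ≤ τ i q * (p q / τ i q - 1) :=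
      mul_le_mul_of_nonneg_left this (hτ i q).le
    have h4 : τ i q * (p q / τ i q - 1) = p q - τ i q := by
      field_simp [(hτ i q).ne']
    rw [hf, hg]; dsimp only; linarith [h3, h4 ▸ h3]
  have hsg : ∑ q, g q = 0 := by
    rw [hg]; dsimp only
    rw [Finset.sum_sub_distrib, hps, hτs i]; ring
  have hsf : (∑ q, f q) = (∑ q, τ i q * (B q - Real.log (τ i q))) - Real.log Z := by
    have : ∀ q : Fin Q, f q = τ i q * (B q - Real.log (τ i q)) - τ i q * Real.log Z := by
      intro q
      rw [hf]; dsimp only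
      rw [Real.log_div (hp q).ne' (hτ i q).ne', hlogp q]
      ring
    rw [Finset.sum_congr rfl fun q _ => this q, Finset.sum_sub_distrib, ← Finset.sum_mul,
      hτs i, one_mul]
  have hsum_eq : ∑ q, f q = ∑ q, g q := by
    have h5 : ∑ q, f q ≤ ∑ q, g q := Finset.sum_le_sum hfg
    have h6 : (0:ℝ) ≤ ∑ q, f q := by rw [hsf]; linarith
    rw [hsg]; linarith [hsg ▸ h5]
  have heach : ∀ q ∈ (univ : Finset (Fin Q)), f q = g q :=
    (Finset.sum_eq_sum_iff_of_le hfg).mp hsum_eq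
  have hτp : ∀ q, τ i q = p q := by
    intro q
    have hy : 0 < p q / τ i q := div_pos (hp q) (hτ i q)
    by_contra hne
    have hy1 : p q / τ i q ≠ 1 := by
      intro h
      exact hne ((div_eq_one_iff_eq (hτ i q).ne').mp h).symm
    have hlt := Real.log_lt_sub_one_of_pos hy hy1
    have h3 : τ i q * Real.log (p q / τ i q) < τ i q * (p q / τ i q - 1) :=
      mul_lt_mul_of_pos_left hlt (hτ i q)
    have h4 : τ i q * (p q / τ i q - 1) = p q - τ i q := by field_simp [(hτ i q).ne']
    have := heach q (mem_univ q)
    rw [hf, hg] at this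
    dsimp only at this
    rw [h4] at h3
    linarith
  -- conclude
  refine ⟨1 / Z, by positivity, fun q => ?_⟩
  have hexpA : Real.exp (A q) = ∏ j ∈ (univ : Finset (Fin n)).erase i, ∏ l,
      (π q l (x i j) * π l q (x j i)) ^ τ j l := by
    rw [hA]; dsimp only
    rw [Real.exp_sum]
    refine Finset.prod_congr rfl fun j _ => ?_
    rw [Real.exp_sum]
    refine Finset.prod_congr rfl fun l _ => ?_
    have hpos : 0 < π q l (x i j) * π l q (x j i) := mul_pos (hπ _ _ _) (hπ _ _ _)
    rw [Real.rpow_def_of_pos hpos, ← Real.log_mul (hπ q l _).ne' (hπ l q _).ne', mul_comm]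
  have : τ i q = Real.exp (B q) / Z := hτp q
  rw [this, hB]; dsimp only
  rw [Real.exp_add, Real.exp_log (hα q), hexpA]
  ring
end
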